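/- arXiv:2404.10611 — 2 statements merged into one kernel-verified Lean document; each statement's English description precedes it below -/
import Mathlib

section
/- Let O ⊆ ℝ^d be open, let u : ℝ^d → ℝ be three times continuously differentiable on O, let σ > 0, and define y := u − σ L̄u on O. Then for every ε > 0 and every x ∈ O, φ_ε(x) · σ L̄φ_ε(x) ≥ φ(x)² − φ(x) ‖∇y(x)‖. -/
open Real MeasureTheory
open scoped BigOperators RealInnerProductSpace

/-- Partial derivative in the `i`-th coordinate direction. -/
noncomputable def pd {d : ℕ} (i : Fin d) (f : EuclideanSpace ℝ (Fin d) → ℝ)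
    (x : EuclideanSpace ℝ (Fin d)) : ℝ :=
  fderiv ℝ f x (EuclideanSpace.single i 1)

/-- The (Gaussian) Ornstein–Uhlenbeck operator `L̄f(x) = Δf(x) − ⟨x, ∇f(x)⟩`. -/
noncomputable def OU {d : ℕ} (f : EuclideanSpace ℝ (Fin d) → ℝ)
    (x : EuclideanSpace ℝ (Fin d)) : ℝ :=
  (∑ i, pd i (pd i f) x) - ⟪x, gradient f x⟫

/-- `φ(x) = ‖∇u(x)‖`. -/
noncomputable def phi {d : ℕ} (u : EuclideanSpace ℝ (Fin d) → ℝ)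
    (x : EuclideanSpace ℝ (Fin d)) : ℝ :=
  ‖gradient u x‖

/-- `φ_ε(x) = √(ε² + ‖∇u(x)‖²)`. -/
noncomputable def phiEps {d : ℕ} (ε : ℝ) (u : EuclideanSpace ℝ (Fin d) → ℝ)
    (x : EuclideanSpace ℝ (Fin d)) : ℝ :=
  Real.sqrt (ε ^ 2 + ‖gradient u x‖ ^ 2)

/-!
Put `G = φ_ε² = ε² + ‖∇u‖² = ε² + ∑ⱼ (∂ⱼu)²`. The product rule
`L̄(fg) = f L̄g + g L̄f + 2⟨∇f, ∇g⟩`, applied to `G = φ_ε · φ_ε` and to each `(∂ⱼu)²`, together with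
the commutation relation `L̄(∂ⱼu) = ∂ⱼ(L̄u) + ∂ⱼu`, gives the Bochner identity
`φ_ε L̄φ_ε + ‖∇φ_ε‖² = ½ L̄‖∇u‖² = ‖D²u‖² + ⟨∇u, ∇L̄u⟩ + ‖∇u‖²`.
Since `φ_ε ∇φ_ε = D²u ∇u` and `‖∇u‖ ≤ φ_ε`, Cauchy–Schwarz gives `‖∇φ_ε‖² ≤ ‖D²u‖²`, hence
`φ_ε L̄φ_ε ≥ ⟨∇u, ∇L̄u⟩ + ‖∇u‖²`. Multiplying by `σ` and substituting `σ ∇L̄u = ∇u - ∇y`, the claim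
follows from `⟨∇u, ∇y⟩ ≤ ‖∇u‖ ‖∇y‖`.
-/
open Filter Topology

section PartialDerivatives

variable {d : ℕ} {f g : EuclideanSpace ℝ (Fin d) → ℝ} {x : EuclideanSpace ℝ (Fin d)} (i : Fin d)

lemma gradient_apply_eq_pd (f : EuclideanSpace ℝ (Fin d) → ℝ) (x : EuclideanSpace ℝ (Fin d)) :
    gradient f x i = pd i f x := by
  rw [pd, ← inner_gradient_left, EuclideanSpace.inner_single_right]
  simp

lemma gradient_eq_iff_forall_pd {v : EuclideanSpace ℝ (Fin d)} :
    gradient f x = v ↔ ∀ i, pd i f x = v i := by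
  simp only [← gradient_apply_eq_pd]
  exact ⟨fun h i => h ▸ rfl, fun h => PiLp.ext h⟩

lemma inner_eq_sum_mul (a b : EuclideanSpace ℝ (Fin d)) : ⟪a, b⟫ = ∑ i, a i * b i := by
  simp [PiLp.inner_apply, mul_comm]

lemma Filter.EventuallyEq.pd_eq (h : f =ᶠ[𝓝 x] g) : pd i f x = pd i g x := by
  rw [pd, pd, h.fderiv_eq]

lemma pd_const_add (c : ℝ) : pd i (fun z => c + f z) = pd i f := by
  ext x
  rw [pd, pd, fderiv_const_add]

lemma pd_add (hf : DifferentiableAt ℝ f x) (hg : DifferentiableAt ℝ g x) :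
    pd i (fun z => f z + g z) x = pd i f x + pd i g x := by
  simp [pd, fderiv_fun_add hf hg]

lemma pd_sub (hf : DifferentiableAt ℝ f x) (hg : DifferentiableAt ℝ g x) :
    pd i (fun z => f z - g z) x = pd i f x - pd i g x := by
  simp [pd, fderiv_fun_sub hf hg]

lemma pd_const_mul (c : ℝ) (hf : DifferentiableAt ℝ f x) :
    pd i (fun z => c * f z) x = c * pd i f x := by
  simp [pd, fderiv_const_mul hf]

lemma pd_mul (hf : DifferentiableAt ℝ f x) (hg : DifferentiableAt ℝ g x) :
    pd i (fun z => f z * g z) x = f x * pd i g x + pd i f x * g x := by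
  simp [pd, fderiv_fun_mul hf hg, mul_comm]

lemma pd_sum {ι : Type*} (s : Finset ι) {F : ι → EuclideanSpace ℝ (Fin d) → ℝ}
    (hF : ∀ j ∈ s, DifferentiableAt ℝ (F j) x) :
    pd i (fun z => ∑ j ∈ s, F j z) x = ∑ j ∈ s, pd i (F j) x := by
  simp [pd, fderiv_fun_sum hF]

lemma pd_coord (j : Fin d) : pd i (fun z => z j) x = if i = j then 1 else 0 := by
  rw [pd, show (fun z : EuclideanSpace ℝ (Fin d) => z j) = EuclideanSpace.proj j from rfl,
    ContinuousLinearMap.fderiv]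
  simp [eq_comm]

lemma ContDiffAt.contDiffAt_pd {m n : WithTop ℕ∞} (hf : ContDiffAt ℝ m f x) (hnm : n + 1 ≤ m) :
    ContDiffAt ℝ n (pd i f) x :=
  (hf.fderiv_right hnm).clm_apply contDiffAt_const

lemma pd_pd_comm (hf : ContDiffAt ℝ 2 f x) (j : Fin d) : pd i (pd j f) x = pd j (pd i f) x := by
  have hf' : DifferentiableAt ℝ (fderiv ℝ f) x :=
    (hf.fderiv_right (m := 1) le_rfl).differentiableAt one_ne_zero
  have hsecond (a b : Fin d) : pd a (pd b f) x =
      fderiv ℝ (fderiv ℝ f) x (EuclideanSpace.single a 1) (EuclideanSpace.single b 1) := by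
    change fderiv ℝ (fun z => fderiv ℝ f z (EuclideanSpace.single b 1)) x _ = _
    rw [fderiv_clm_apply hf' (differentiableAt_const _)]
    simp
  rw [hsecond, hsecond,
    (hf.isSymmSndFDerivAt (by simp [minSmoothness_of_isRCLikeNormedField])).eq]

end PartialDerivatives

section OrnsteinUhlenbeck

variable {d : ℕ} {f g u : EuclideanSpace ℝ (Fin d) → ℝ} {x : EuclideanSpace ℝ (Fin d)}

lemma ContDiffAt.eventually_differentiableAt (hf : ContDiffAt ℝ 2 f x) :
    ∀ᶠ z in 𝓝 x, DifferentiableAt ℝ f z :=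
  (hf.eventually (by simp)).mono fun _ hz => hz.differentiableAt (by norm_num)

lemma ContDiffAt.differentiableAt_pd (hf : ContDiffAt ℝ 2 f x) (i : Fin d) :
    DifferentiableAt ℝ (pd i f) x :=
  (hf.contDiffAt_pd i (n := 1) (by norm_num)).differentiableAt one_ne_zero

lemma OU_eq_sum (f : EuclideanSpace ℝ (Fin d) → ℝ) (x : EuclideanSpace ℝ (Fin d)) :
    OU f x = ∑ i, (pd i (pd i f) x - x i * pd i f x) := by
  simp only [OU, inner_eq_sum_mul, gradient_apply_eq_pd, Finset.sum_sub_distrib]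

lemma OU_const_add (c : ℝ) : OU (fun z => c + f z) = OU f := by
  ext x
  simp only [OU_eq_sum, pd_const_add]

lemma pd_pd_mul (hf : ContDiffAt ℝ 2 f x) (hg : ContDiffAt ℝ 2 g x) (i : Fin d) :
    pd i (pd i fun z => f z * g z) x =
      f x * pd i (pd i g) x + 2 * (pd i f x * pd i g x) + pd i (pd i f) x * g x := by
  have h : pd i (fun z => f z * g z) =ᶠ[𝓝 x] fun z => f z * pd i g z + pd i f z * g z := by
    filter_upwards [hf.eventually_differentiableAt, hg.eventually_differentiableAt]
      with z hfz hgz using pd_mul i hfz hgz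
  have hf₁ := hf.differentiableAt (by norm_num)
  have hg₁ := hg.differentiableAt (by norm_num)
  have hf₂ := hf.differentiableAt_pd i
  have hg₂ := hg.differentiableAt_pd i
  rw [h.pd_eq, pd_add i (hf₁.fun_mul hg₂) (hf₂.fun_mul hg₁), pd_mul i hf₁ hg₂, pd_mul i hf₂ hg₁]
  ring

lemma OU_mul (hf : ContDiffAt ℝ 2 f x) (hg : ContDiffAt ℝ 2 g x) :
    OU (fun z => f z * g z) x =
      f x * OU g x + g x * OU f x + 2 * ⟪gradient f x, gradient g x⟫ := by
  simp only [OU_eq_sum, pd_pd_mul hf hg, pd_mul _ (hf.differentiableAt (by norm_num))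
    (hg.differentiableAt (by norm_num)), inner_eq_sum_mul, gradient_apply_eq_pd, Finset.mul_sum,
    ← Finset.sum_add_distrib]
  congr 1 with i
  ring

lemma OU_sum {ι : Type*} (s : Finset ι) {F : ι → EuclideanSpace ℝ (Fin d) → ℝ}
    (hF : ∀ j ∈ s, ContDiffAt ℝ 2 (F j) x) :
    OU (fun z => ∑ j ∈ s, F j z) x = ∑ j ∈ s, OU (F j) x := by
  have h (i : Fin d) : pd i (fun z => ∑ j ∈ s, F j z) =ᶠ[𝓝 x] fun z => ∑ j ∈ s, pd i (F j) z := by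
    filter_upwards [(eventually_all_finset s).2 fun j hj => (hF j hj).eventually_differentiableAt]
      with z hz using pd_sum i s hz
  simp only [OU_eq_sum, fun i => (h i).pd_eq,
    pd_sum _ s fun j hj => (hF j hj).differentiableAt_pd _,
    pd_sum _ s fun j hj => (hF j hj).differentiableAt (n := 2) (by norm_num), Finset.mul_sum,
    ← Finset.sum_sub_distrib]
  exact Finset.sum_comm

lemma pd_pd_pd_comm (hf : ContDiffAt ℝ 3 f x) (i j k : Fin d) :
    pd i (pd j (pd k f)) x = pd j (pd k (pd i f)) x := by
  have hcomm : pd i (pd k f) =ᶠ[𝓝 x] pd k (pd i f) := by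
    filter_upwards [hf.eventually (by simp)] with z hz using pd_pd_comm i (hz.of_le (by norm_num)) k
  rw [pd_pd_comm i (hf.contDiffAt_pd k (by norm_num)) j, hcomm.pd_eq]

lemma differentiableAt_OU (hf : ContDiffAt ℝ 3 f x) : DifferentiableAt ℝ (OU f) x := by
  have hpdpd (i : Fin d) := (hf.contDiffAt_pd i (n := 2) (by norm_num)).differentiableAt_pd i
  have hpd (i : Fin d) := (hf.of_le (by norm_num)).differentiableAt_pd i
  rw [show OU f = _ from funext (OU_eq_sum f)]
  fun_prop

lemma OU_pd (hf : ContDiffAt ℝ 3 f x) (j : Fin d) :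
    OU (pd j f) x = pd j (OU f) x + pd j f x := by
  have hf₂ : ContDiffAt ℝ 2 f x := hf.of_le (by norm_num)
  have hterm (i : Fin d) : pd j (fun z => pd i (pd i f) z - z i * pd i f z) x =
      pd i (pd i (pd j f)) x - x i * pd i (pd j f) x - (if j = i then pd i f x else 0) := by
    have hpdpd := (hf.contDiffAt_pd i (n := 2) (by norm_num)).differentiableAt_pd i
    have hcoord : DifferentiableAt ℝ (fun z : EuclideanSpace ℝ (Fin d) => z i) x := by
      fun_prop
    rw [pd_sub j hpdpd (hcoord.fun_mul (hf₂.differentiableAt_pd i)),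
      pd_mul j hcoord (hf₂.differentiableAt_pd i), pd_coord, pd_pd_pd_comm hf,
      pd_pd_comm j hf₂ i]
    split_ifs <;> ring
  have hdiff (i : Fin d) : DifferentiableAt ℝ (fun z => pd i (pd i f) z - z i * pd i f z) x := by
    have hpdpd := (hf.contDiffAt_pd i (n := 2) (by norm_num)).differentiableAt_pd i
    have hpd := hf₂.differentiableAt_pd i
    fun_prop
  rw [show OU f = _ from funext (OU_eq_sum f), pd_sum j _ fun i _ => hdiff i, OU_eq_sum]
  simp only [hterm, Finset.sum_sub_distrib, Finset.sum_ite_eq, Finset.mem_univ, if_true]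
  ring

lemma norm_gradient_sq_eq_sum (f : EuclideanSpace ℝ (Fin d) → ℝ) (x : EuclideanSpace ℝ (Fin d)) :
    ‖gradient f x‖ ^ 2 = ∑ j, pd j f x * pd j f x := by
  rw [← real_inner_self_eq_norm_sq, inner_eq_sum_mul]
  simp only [gradient_apply_eq_pd]

lemma OU_norm_gradient_sq (hu : ContDiffAt ℝ 3 u x) :
    OU (fun z => ‖gradient u z‖ ^ 2) x =
      2 * ∑ j, ‖gradient (pd j u) x‖ ^ 2 + 2 * ⟪gradient u x, gradient (OU u) x⟫ +
        2 * ‖gradient u x‖ ^ 2 := by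
  have hpd (j : Fin d) : ContDiffAt ℝ 2 (pd j u) x := hu.contDiffAt_pd j (by norm_num)
  simp only [norm_gradient_sq_eq_sum u, OU_sum _ fun j _ => (hpd j).mul (hpd j),
    OU_mul (hpd _) (hpd _), OU_pd hu, real_inner_self_eq_norm_sq, inner_eq_sum_mul,
    gradient_apply_eq_pd, Finset.mul_sum, ← Finset.sum_add_distrib]
  congr 1 with j
  ring

end OrnsteinUhlenbeck

section PhiEps

variable {d : ℕ} {u : EuclideanSpace ℝ (Fin d) → ℝ} {x : EuclideanSpace ℝ (Fin d)} {ε : ℝ}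

lemma phiEps_mul_self (ε : ℝ) (u : EuclideanSpace ℝ (Fin d) → ℝ) (z : EuclideanSpace ℝ (Fin d)) :
    phiEps ε u z * phiEps ε u z = ε ^ 2 + ‖gradient u z‖ ^ 2 :=
  Real.mul_self_sqrt (by positivity)

lemma phiEps_pos (hε : ε ≠ 0) (u : EuclideanSpace ℝ (Fin d) → ℝ) (z : EuclideanSpace ℝ (Fin d)) :
    0 < phiEps ε u z :=
  Real.sqrt_pos.2 (by positivity)

lemma contDiffAt_phiEps {m n : WithTop ℕ∞} (hu : ContDiffAt ℝ m u x) (hnm : n + 1 ≤ m)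
    (hε : ε ≠ 0) : ContDiffAt ℝ n (phiEps ε u) x := by
  have hpd (j : Fin d) : ContDiffAt ℝ n (pd j u) x := hu.contDiffAt_pd j hnm
  rw [show phiEps ε u = fun z => √(ε ^ 2 + ∑ j, pd j u z * pd j u z) from
    funext fun z => by rw [phiEps, norm_gradient_sq_eq_sum]]
  exact (contDiffAt_const.add (ContDiffAt.sum fun j _ => (hpd j).mul (hpd j))).sqrt
    (by rw [← norm_gradient_sq_eq_sum]; positivity)

lemma phiEps_smul_gradient_phiEps (hu : ContDiffAt ℝ 2 u x) (hε : ε ≠ 0) :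
    phiEps ε u x • gradient (phiEps ε u) x = ∑ j, pd j u x • gradient (pd j u) x := by
  have hφ := (contDiffAt_phiEps hu (n := 1) (by norm_num) hε).differentiableAt one_ne_zero
  have hpd (j : Fin d) := hu.differentiableAt_pd j
  ext i
  have h := pd_mul i hφ hφ
  simp only [phiEps_mul_self, pd_const_add, norm_gradient_sq_eq_sum,
    pd_sum i _ fun j _ => (hpd j).fun_mul (hpd j), pd_mul i (hpd _) (hpd _),
    Finset.sum_add_distrib, mul_comm (pd i (pd _ u) x) (pd _ u x)] at h
  simp only [PiLp.smul_apply, WithLp.ofLp_sum, Finset.sum_apply, smul_eq_mul, gradient_apply_eq_pd]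
  linarith

lemma norm_gradient_phiEps_sq_le (hu : ContDiffAt ℝ 2 u x) (hε : ε ≠ 0) :
    ‖gradient (phiEps ε u) x‖ ^ 2 ≤ ∑ j, ‖gradient (pd j u) x‖ ^ 2 := by
  have hφ := phiEps_pos hε u x
  refine le_of_mul_le_mul_left ?_ (pow_pos hφ 2)
  calc phiEps ε u x ^ 2 * ‖gradient (phiEps ε u) x‖ ^ 2
      = ‖∑ j, pd j u x • gradient (pd j u) x‖ ^ 2 := by
        rw [← phiEps_smul_gradient_phiEps hu hε, norm_smul, mul_pow, Real.norm_of_nonneg hφ.le]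
    _ ≤ (∑ j, ‖pd j u x‖ * ‖gradient (pd j u) x‖) ^ 2 := by
        gcongr
        exact (norm_sum_le _ _).trans_eq (by simp only [norm_smul])
    _ ≤ (∑ j, ‖pd j u x‖ ^ 2) * ∑ j, ‖gradient (pd j u) x‖ ^ 2 :=
        Finset.sum_mul_sq_le_sq_mul_sq _ _ _
    _ = ‖gradient u x‖ ^ 2 * ∑ j, ‖gradient (pd j u) x‖ ^ 2 := by
        rw [norm_gradient_sq_eq_sum]
        simp only [Real.norm_eq_abs, sq_abs, ← sq]
    _ ≤ phiEps ε u x ^ 2 * ∑ j, ‖gradient (pd j u) x‖ ^ 2 := by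
        rw [sq (phiEps ε u x), phiEps_mul_self]
        exact mul_le_mul_of_nonneg_right (le_add_of_nonneg_left (sq_nonneg ε)) (by positivity)

lemma le_phiEps_mul_OU_phiEps (hu : ContDiffAt ℝ 3 u x) (hε : ε ≠ 0) :
    ⟪gradient u x, gradient (OU u) x⟫ + ‖gradient u x‖ ^ 2 ≤ phiEps ε u x * OU (phiEps ε u) x := by
  have hφ := contDiffAt_phiEps hu (n := 2) (by norm_num) hε
  have hsquare := OU_mul hφ hφ
  simp only [phiEps_mul_self, OU_const_add, OU_norm_gradient_sq hu,
    real_inner_self_eq_norm_sq] at hsquare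
  linarith [norm_gradient_phiEps_sq_le (hu.of_le (by norm_num)) hε]

end PhiEps

theorem phiEps_ou_lower_bound {d : ℕ} (O : Set (EuclideanSpace ℝ (Fin d)))
    (hO : IsOpen O) (u : EuclideanSpace ℝ (Fin d) → ℝ) (hu : ContDiffOn ℝ 3 u O)
    (σ : ℝ) (hσ : 0 < σ) (y : EuclideanSpace ℝ (Fin d) → ℝ)
    (hy : ∀ x ∈ O, y x = u x - σ * OU u x) (ε : ℝ) (hε : 0 < ε) :
    ∀ x ∈ O,
      phiEps ε u x * (σ * OU (phiEps ε u) x) ≥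
        (phi u x) ^ 2 - phi u x * ‖gradient y x‖ := by
  intro x hx
  have hux : ContDiffAt ℝ 3 u x := hu.contDiffAt (hO.mem_nhds hx)
  have hgrad_y : gradient y x = gradient u x - σ • gradient (OU u) x := by
    have hyx : y =ᶠ[𝓝 x] fun z => u z - σ * OU u z :=
      eventually_of_mem (hO.mem_nhds hx) hy
    rw [gradient_eq_iff_forall_pd]
    intro j
    rw [hyx.pd_eq, pd_sub j (hux.differentiableAt (by norm_num))
      ((differentiableAt_OU hux).const_mul σ), pd_const_mul j σ (differentiableAt_OU hux)]
    simp [gradient_apply_eq_pd]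
  have hbochner := mul_le_mul_of_nonneg_left (le_phiEps_mul_OU_phiEps hux hε.ne') hσ.le
  have hcs := real_inner_le_norm (gradient u x) (gradient y x)
  rw [hgrad_y, inner_sub_right, inner_smul_right, real_inner_self_eq_norm_sq] at hcs
  rw [phi, hgrad_y]
  linarith [mul_nonneg hσ.le (sq_nonneg ‖gradient u x‖)]
end

section
/- Let α ∈ (0,1), let g'' : ℝ → ℝ be α-Hölder continuous with Hölder seminorm [g'']_α (i.e., |g''(a) − g''(b)| ≤ [g'']_α |a − b|^α for all a, b ∈ ℝ), let x₁, x₂ ∈ L²(0,1), and let h, k : [0,1] → ℝ be absolutely continuous with h(0) = k(0) = 0 and derivatives h', k' ∈ L²(0,1). Then |∫_0^1 (g''(x₁(s)) − g''(x₂(s))) h(s) k(s) ds| ≤ [g'']_α ‖h'‖_{L²(0,1)} ‖k'‖_{L²(0,1)} ‖x₁ − x₂‖_{L²(0,1)}^α. -/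
open Real MeasureTheory

/-!
Since `h 0 = 0`, Cauchy–Schwarz bounds `|h|` on `[0, 1]` by `‖h'‖_{L²}`, and likewise `|k|` by
`‖k'‖_{L²}`. The Hölder bound on `G` then reduces the integral to `C ‖h'‖ ‖k'‖ ∫ |x₁ - x₂| ^ α`,
and on the probability space `(0, 1]` the `L^α` quasi-norm is dominated by the `L²` norm.
-/

theorem integral_abs_rpow_le_sqrt_integral_sq_rpow {X : Type*} [MeasurableSpace X]
    {μ : Measure X} [IsProbabilityMeasure μ] {f : X → ℝ} (hf : MemLp f 2 μ)
    {α : ℝ} (hα : 0 < α) (hα2 : α ≤ 2) :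
    ∫ x, |f x| ^ α ∂μ ≤ √(∫ x, f x ^ 2 ∂μ) ^ α := by
  have hαp : ENNReal.ofReal α ≤ 2 := by
    simpa using ENNReal.ofReal_le_ofReal hα2
  have hαp0 : ENNReal.ofReal α ≠ 0 := by simpa using hα
  have hmono := eLpNorm_le_eLpNorm_of_exponent_le hαp hf.1
  rw [(hf.mono_exponent hαp).eLpNorm_eq_integral_rpow_norm hαp0 ENNReal.ofReal_ne_top,
    hf.eLpNorm_eq_integral_rpow_norm two_ne_zero ENNReal.ofNat_ne_top,
    ENNReal.ofReal_le_ofReal_iff (by positivity)] at hmono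
  simp only [ENNReal.toReal_ofReal hα.le, ENNReal.toReal_ofNat, Real.norm_eq_abs] at hmono
  have hint : 0 ≤ ∫ x, |f x| ^ α ∂μ := integral_nonneg fun x => by positivity
  calc ∫ x, |f x| ^ α ∂μ = ((∫ x, |f x| ^ α ∂μ) ^ α⁻¹) ^ α := by
        rw [← rpow_mul hint, inv_mul_cancel₀ hα.ne', rpow_one]
    _ ≤ ((∫ x, |f x| ^ (2 : ℝ) ∂μ) ^ (2 : ℝ)⁻¹) ^ α := by gcongr
    _ = √(∫ x, f x ^ 2 ∂μ) ^ α := by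
        simp [sqrt_eq_rpow, ← one_div]

instance isProbabilityMeasure_restrict_Ioc_zero_one :
    IsProbabilityMeasure (volume.restrict (Set.Ioc (0 : ℝ) 1)) :=
  ⟨by simp⟩

theorem abs_intervalIntegral_le_sqrt_integral_sq {f : ℝ → ℝ}
    (hf : MemLp f 2 (volume.restrict (Set.Ioc 0 1))) {s : ℝ} (hs : s ∈ Set.Icc (0 : ℝ) 1) :
    |∫ t in 0..s, f t| ≤ √(∫ t in Set.Ioc 0 1, f t ^ 2) := by
  rw [intervalIntegral.integral_of_le hs.1]
  calc |∫ t in Set.Ioc 0 s, f t| ≤ ∫ t in Set.Ioc 0 s, |f t| := abs_integral_le_integral_abs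
    _ ≤ ∫ t in Set.Ioc 0 1, |f t| :=
        setIntegral_mono_set (hf.integrable one_le_two).abs
          (.of_forall fun t => abs_nonneg _) (Set.Ioc_subset_Ioc_right hs.2).eventuallyLE
    _ ≤ √(∫ t in Set.Ioc 0 1, f t ^ 2) := by
        simpa using integral_abs_rpow_le_sqrt_integral_sq_rpow hf one_pos one_le_two

theorem abs_integral_sub_comp_mul_le {X : Type*} [MeasurableSpace X]
    {μ : Measure X} [IsProbabilityMeasure μ] {G : ℝ → ℝ} {C α : ℝ} (hα : 0 < α) (hα2 : α ≤ 2)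
    (hG : ∀ a b, |G a - G b| ≤ C * |a - b| ^ α) {x₁ x₂ w : X → ℝ}
    (hx : MemLp (x₁ - x₂) 2 μ) {M : ℝ} (hw : ∀ᵐ x ∂μ, |w x| ≤ M) :
    |∫ x, (G (x₁ x) - G (x₂ x)) * w x ∂μ| ≤ C * M * √(∫ x, (x₁ x - x₂ x) ^ 2 ∂μ) ^ α := by
  have hC : 0 ≤ C := by simpa using (abs_nonneg _).trans (hG 1 0)
  have hM : 0 ≤ M := by
    obtain ⟨x, hwx⟩ := hw.exists
    exact (abs_nonneg _).trans hwx
  have hpointwise : ∀ᵐ x ∂μ, ‖(G (x₁ x) - G (x₂ x)) * w x‖ ≤ C * M * |x₁ x - x₂ x| ^ α := by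
    filter_upwards [hw] with x hwx
    rw [norm_mul, norm_eq_abs, norm_eq_abs, mul_right_comm]
    exact mul_le_mul (hG _ _) hwx (abs_nonneg _) (by positivity)
  have hintegrable : Integrable (fun x => |x₁ x - x₂ x| ^ α) μ := by
    have hαp : ENNReal.ofReal α ≤ 2 := by simpa using ENNReal.ofReal_le_ofReal hα2
    simpa [ENNReal.toReal_ofReal hα.le] using
      (hx.mono_exponent hαp).integrable_norm_rpow (by simpa using hα) ENNReal.ofReal_ne_top
  calc |∫ x, (G (x₁ x) - G (x₂ x)) * w x ∂μ|
      ≤ ∫ x, C * M * |x₁ x - x₂ x| ^ α ∂μ :=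
        norm_integral_le_of_norm_le (hintegrable.const_mul _) hpointwise
    _ = C * M * ∫ x, |x₁ x - x₂ x| ^ α ∂μ := integral_const_mul _ _
    _ ≤ C * M * √(∫ x, (x₁ x - x₂ x) ^ 2 ∂μ) ^ α := by
        gcongr
        exact integral_abs_rpow_le_sqrt_integral_sq_rpow hx hα hα2

theorem holder_second_derivative_bilinear_estimate_general
    (α : ℝ) (hα : α ∈ Set.Ioo (0 : ℝ) 1)
    (G : ℝ → ℝ) (C : ℝ) (hG : ∀ a b : ℝ, |G a - G b| ≤ C * |a - b| ^ α)
    (x₁ x₂ : ℝ → ℝ)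
    (hx₁ : MemLp x₁ 2 (volume.restrict (Set.Ioc (0 : ℝ) 1)))
    (hx₂ : MemLp x₂ 2 (volume.restrict (Set.Ioc (0 : ℝ) 1)))
    (h k h' k' : ℝ → ℝ)
    (hh : ∀ t ∈ Set.Icc (0 : ℝ) 1, h t = ∫ s in (0 : ℝ)..t, h' s)
    (hk : ∀ t ∈ Set.Icc (0 : ℝ) 1, k t = ∫ s in (0 : ℝ)..t, k' s)
    (hh' : MemLp h' 2 (volume.restrict (Set.Ioc (0 : ℝ) 1)))
    (hk' : MemLp k' 2 (volume.restrict (Set.Ioc (0 : ℝ) 1))) :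
    |∫ s in (0 : ℝ)..1, (G (x₁ s) - G (x₂ s)) * h s * k s| ≤
      C * Real.sqrt (∫ s in (0 : ℝ)..1, h' s ^ 2) *
        Real.sqrt (∫ s in (0 : ℝ)..1, k' s ^ 2) *
          Real.sqrt (∫ s in (0 : ℝ)..1, (x₁ s - x₂ s) ^ 2) ^ α := by
  have hhk : ∀ᵐ s ∂(volume.restrict (Set.Ioc (0 : ℝ) 1)),
      |h s * k s| ≤ √(∫ t in Set.Ioc 0 1, h' t ^ 2) * √(∫ t in Set.Ioc 0 1, k' t ^ 2) := by
    filter_upwards [ae_restrict_mem measurableSet_Ioc] with s hs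
    have hs' := Set.Ioc_subset_Icc_self hs
    rw [abs_mul, hh s hs', hk s hs']
    exact mul_le_mul (abs_intervalIntegral_le_sqrt_integral_sq hh' hs')
      (abs_intervalIntegral_le_sqrt_integral_sq hk' hs') (abs_nonneg _) (sqrt_nonneg _)
  simp only [intervalIntegral.integral_of_le zero_le_one]
  simpa only [mul_assoc] using
    abs_integral_sub_comp_mul_le hα.1 (hα.2.le.trans one_le_two) hG (hx₁.sub hx₂) hhk

theorem holder_second_derivative_bilinear_estimate
    (α : ℝ) (hα : α ∈ Set.Ioo (0 : ℝ) 1)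
    (G : ℝ → ℝ) (C : ℝ) (hG : ∀ a b : ℝ, |G a - G b| ≤ C * |a - b| ^ α)
    (x₁ x₂ : ℝ → ℝ) (hx₁m : Measurable x₁) (hx₂m : Measurable x₂)
    (hx₁ : MemLp x₁ 2 (volume.restrict (Set.Ioc (0 : ℝ) 1)))
    (hx₂ : MemLp x₂ 2 (volume.restrict (Set.Ioc (0 : ℝ) 1)))
    (h k h' k' : ℝ → ℝ)
    (hh : ∀ t ∈ Set.Icc (0 : ℝ) 1, h t = ∫ s in (0 : ℝ)..t, h' s)
    (hk : ∀ t ∈ Set.Icc (0 : ℝ) 1, k t = ∫ s in (0 : ℝ)..t, k' s)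
    (hh' : MemLp h' 2 (volume.restrict (Set.Ioc (0 : ℝ) 1)))
    (hk' : MemLp k' 2 (volume.restrict (Set.Ioc (0 : ℝ) 1))) :
    |∫ s in (0 : ℝ)..1, (G (x₁ s) - G (x₂ s)) * h s * k s| ≤
      C * Real.sqrt (∫ s in (0 : ℝ)..1, h' s ^ 2) *
        Real.sqrt (∫ s in (0 : ℝ)..1, k' s ^ 2) *
          Real.sqrt (∫ s in (0 : ℝ)..1, (x₁ s - x₂ s) ^ 2) ^ α :=
  holder_second_derivative_bilinear_estimate_general α hα G C hG x₁ x₂ hx₁ hx₂ h k h' k' hh hk hh'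
    hk'
end
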